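/- arXiv:2103.09795 — 6 statements merged into one kernel-verified Lean document; each statement's English description precedes it below -/
import Mathlib

section
/- Let R = q^{2m} with m ∈ ℤ and let a ∈ ℚ_q. With P := {(ξ,η) ∈ ℚ_q² : |ξ − a| ≤ R^{-1/2}, |η − ξ²| ≤ R^{-1}} and T := {(x,y) ∈ ℚ_q² : |x + 2ay| ≤ R^{1/2}, |y| ≤ R}, one has for every (x,y) ∈ ℚ_q²: ∫_{P} χ(ξx + ηy) dμ²(ξ,η) = R^{-3/2} χ(ax + a²y) · 1_T(x,y). -/
/-!
The substitution `(ξ, η) = (a + u, (a + u)² + v)` preserves Haar measure on `ℚ_q²` and carries the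
box `|u| ≤ R^{-1/2}, |v| ≤ R^{-1}` onto `P`. The phase becomes
`χ(ax + a²y) · χ(u(x + 2ay) + u²y) · χ(vy)`, so the integral splits into a `u`- and a `v`-integral
over balls. The `v`-integral vanishes unless `|y| ≤ R`, and then `χ(u²y) = 1` on the `u`-ball.
The integral of `u ↦ χ(ut)` over a ball is its volume when the character is trivial on the ball,
and `0` otherwise, since translating by a point where it is nontrivial multiplies the integral
by a factor `≠ 1`.
-/

open MeasureTheory

noncomputable instance (q : ℕ) [Fact q.Prime] : MeasurableSpace ℚ_[q] := borel _
instance (q : ℕ) [Fact q.Prime] : BorelSpace ℚ_[q] := ⟨rfl⟩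

open Metric Set

section Shear

variable {G : Type*} [AddGroup G] [MeasurableSpace G] [MeasurableAdd₂ G] [MeasurableNeg G]

@[simps apply]
def MeasurableEquiv.translateShear (a : G) {h : G → G} (hh : Measurable h) :
    G × G ≃ᵐ G × G where
  toFun p := (p.1 + a, h p.1 + p.2)
  invFun p := (p.1 + -a, -h (p.1 + -a) + p.2)
  left_inv p := by simp [add_assoc]
  right_inv p := by simp [add_assoc]
  measurable_toFun := by
    change Measurable fun p : G × G => (p.1 + a, h p.1 + p.2)
    fun_prop
  measurable_invFun := by
    change Measurable fun p : G × G => (p.1 + -a, -h (p.1 + -a) + p.2)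
    fun_prop

theorem measurePreserving_translateShear (μ : Measure G) [SFinite μ]
    [μ.IsAddLeftInvariant] [μ.IsAddRightInvariant] (a : G) {h : G → G} (hh : Measurable h) :
    MeasurePreserving (MeasurableEquiv.translateShear a hh) (μ.prod μ) (μ.prod μ) :=
  (measurePreserving_add_right μ a).skew_product (by fun_prop)
    (ae_of_all _ fun u => map_add_left_eq_self μ (h u))

end Shear

theorem setIntegral_parabolicBox {R E : Type*} [NormedCommRing R] [MeasurableSpace R]
    [MeasurableAdd₂ R] [MeasurableNeg R] [MeasurableMul₂ R] [NormedAddCommGroup E]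
    [NormedSpace ℝ E] (μ : Measure R) [SFinite μ] [μ.IsAddLeftInvariant] [μ.IsAddRightInvariant]
    (f : R × R → E) (a : R) (r s : ℝ) :
    ∫ p in {p : R × R | ‖p.1 - a‖ ≤ r ∧ ‖p.2 - p.1 ^ 2‖ ≤ s}, f p ∂(μ.prod μ) =
      ∫ p in closedBall 0 r ×ˢ closedBall 0 s, f (p.1 + a, (p.1 + a) ^ 2 + p.2) ∂(μ.prod μ) := by
  have hsq : Measurable fun u : R => (u + a) ^ 2 := by fun_prop
  have hpre : MeasurableEquiv.translateShear a hsq ⁻¹'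
      {p : R × R | ‖p.1 - a‖ ≤ r ∧ ‖p.2 - p.1 ^ 2‖ ≤ s} = closedBall 0 r ×ˢ closedBall 0 s := by
    ext p; simp
  rw [← (measurePreserving_translateShear μ a hsq).setIntegral_preimage_emb
    (MeasurableEquiv.measurableEmbedding _), hpre]
  rfl

theorem AddChar.setIntegral_addSubgroup_eq_zero {G 𝕜 : Type*} [AddGroup G] [MeasurableSpace G]
    [MeasurableAdd G] [RCLike 𝕜] (μ : Measure G) [μ.IsAddRightInvariant] (ψ : AddChar G 𝕜)
    (H : AddSubgroup G) {g : G} (hg : g ∈ H) (hψg : ψ g ≠ 1) :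
    ∫ x in (H : Set G), ψ x ∂μ = 0 := by
  have hpre : (· + g) ⁻¹' (H : Set G) = H := by
    ext x; simp [H.add_mem_cancel_right hg]
  have hshift := (measurePreserving_add_right μ g).setIntegral_preimage_emb
    (measurableEmbedding_addRight g) ψ H
  rw [hpre] at hshift
  have hinvariant : ψ g * ∫ x in (H : Set G), ψ x ∂μ = ∫ x in (H : Set G), ψ x ∂μ := by
    rw [← integral_const_mul, ← hshift]
    simp [AddChar.map_add_eq_mul, mul_comm]
  have hfix : (ψ g - 1) * ∫ x in (H : Set G), ψ x ∂μ = 0 := by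
    rw [sub_mul, hinvariant, one_mul, sub_self]
  exact (mul_eq_zero.1 hfix).resolve_left (sub_ne_zero.2 hψg)

open scoped ENNReal

namespace Padic

variable {q : ℕ} [hq : Fact q.Prime]

theorem norm_natCast_sub_natCast_eq_one {c c' : ℕ} (hc : c < q) (hc' : c' < q) (hne : c ≠ c') :
    ‖(c : ℚ_[q]) - c'‖ = 1 := by
  have hndvd : ¬ (q : ℤ) ∣ (c - c' : ℤ) := fun hdvd =>
    hne (by have := Int.eq_zero_of_abs_lt_dvd hdvd (by rw [abs_lt]; omega); omega)
  rw [← Padic.norm_intCast_lt_one_iff] at hndvd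
  push_cast at hndvd
  exact le_antisymm (by exact_mod_cast Padic.norm_int_le_one (c - c' : ℤ)) (not_lt.1 hndvd)

theorem closedBall_zpow_succ_eq_biUnion (k : ℤ) :
    closedBall (0 : ℚ_[q]) ((q : ℝ) ^ (k + 1)) =
      ⋃ c ∈ Finset.range q, closedBall ((c : ℚ_[q]) * (q : ℚ_[q]) ^ (-(k + 1))) ((q : ℝ) ^ k) := by
  have hq0 : (q : ℚ_[q]) ≠ 0 := by exact_mod_cast hq.out.ne_zero
  have hq1 : (1 : ℝ) < q := by exact_mod_cast hq.out.one_lt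
  ext x
  simp only [mem_iUnion, Finset.mem_range, exists_prop, mem_closedBall, dist_eq_norm, sub_zero]
  constructor
  · intro hx
    -- `z = x q^(k+1)` is a `q`-adic integer; its residue digit `zmodRepr` gives the centre
    set z := x * (q : ℚ_[q]) ^ (k + 1)
    have hz : ‖z‖ ≤ 1 := by
      rw [norm_mul, norm_p_zpow, zpow_neg, ← div_eq_mul_inv, div_le_one (by positivity)]
      exact hx
    set w : ℤ_[q] := ⟨z, hz⟩
    obtain ⟨hc, hwc⟩ := PadicInt.zmodRepr_spec w
    have hzc : ‖z - (w.zmodRepr : ℚ_[q])‖ ≤ (q : ℝ) ^ (-1 : ℤ) := by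
      rw [norm_le_pow_iff_norm_lt_pow_add_one]
      have := PadicInt.mem_nonunits.1 ((IsLocalRing.mem_maximalIdeal _).1 hwc)
      rwa [PadicInt.norm_def, PadicInt.coe_sub, PadicInt.coe_natCast] at this
    have hxz : x - w.zmodRepr * (q : ℚ_[q]) ^ (-(k + 1)) =
        (z - w.zmodRepr) * (q : ℚ_[q]) ^ (-(k + 1)) := by
      rw [sub_mul, mul_assoc, ← zpow_add₀ hq0, add_neg_cancel, zpow_zero, mul_one]
    refine ⟨_, hc, ?_⟩
    calc ‖x - w.zmodRepr * (q : ℚ_[q]) ^ (-(k + 1))‖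
        = ‖z - (w.zmodRepr : ℚ_[q])‖ * (q : ℝ) ^ (k + 1) := by
          rw [hxz, norm_mul, norm_p_zpow, neg_neg]
      _ ≤ (q : ℝ) ^ (-1 : ℤ) * (q : ℝ) ^ (k + 1) := by gcongr
      _ = (q : ℝ) ^ k := by rw [← zpow_add₀ (by positivity)]; ring_nf
  · rintro ⟨c, hc, hx⟩
    have hcent : ‖(c : ℚ_[q]) * (q : ℚ_[q]) ^ (-(k + 1))‖ ≤ (q : ℝ) ^ (k + 1) := by
      rw [norm_mul, norm_p_zpow, neg_neg]
      exact mul_le_of_le_one_left (by positivity) (IsUltrametricDist.norm_natCast_le_one ℚ_[q] c)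
    calc ‖x‖ = ‖(x - c * (q : ℚ_[q]) ^ (-(k + 1))) + c * (q : ℚ_[q]) ^ (-(k + 1))‖ := by
          rw [sub_add_cancel]
      _ ≤ (q : ℝ) ^ (k + 1) := (IsUltrametricDist.norm_add_le_max _ _).trans
          (max_le (hx.trans (zpow_le_zpow_right₀ hq1.le (by omega))) hcent)

theorem pairwiseDisjoint_closedBall_zpow (k : ℤ) :
    (Finset.range q : Set ℕ).PairwiseDisjoint
      fun c : ℕ => closedBall ((c : ℚ_[q]) * (q : ℚ_[q]) ^ (-(k + 1))) ((q : ℝ) ^ k) := by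
  intro c hc c' hc' hne
  refine Set.disjoint_left.2 fun x hx hx' => ?_
  have hdist := (IsUltrametricDist.dist_triangle_max _ x _).trans
    (max_le (mem_closedBall'.1 hx) (mem_closedBall.1 hx'))
  rw [dist_eq_norm, ← sub_mul, norm_mul, norm_p_zpow, neg_neg,
    norm_natCast_sub_natCast_eq_one (by simpa using hc) (by simpa using hc') hne, one_mul] at hdist
  exact absurd hdist
    (not_le.2 (zpow_lt_zpow_right₀ (by exact_mod_cast hq.out.one_lt) (lt_add_one k)))

theorem setIntegral_closedBall_addChar_mul_add_sq_mul (μ : Measure ℚ_[q]) (ψ : AddChar ℚ_[q] ℂ)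
    (hψ : ∀ x : ℚ_[q], ‖x‖ ≤ 1 → ψ x = 1) (k : ℤ) (s : ℚ_[q]) {y : ℚ_[q]}
    (hy : ‖y‖ ≤ (q : ℝ) ^ (2 * k)) :
    ∫ u in closedBall 0 ((q : ℝ) ^ (-k)), ψ (u * s + u ^ 2 * y) ∂μ =
      ∫ u in closedBall 0 ((q : ℝ) ^ (-k)), ψ (u * s) ∂μ := by
  refine setIntegral_congr_fun measurableSet_closedBall fun u hu => ?_
  have hone : ψ (u ^ 2 * y) = 1 := hψ _ <| calc
    ‖u ^ 2 * y‖ = ‖u‖ ^ 2 * ‖y‖ := by rw [norm_mul, norm_pow]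
    _ ≤ ((q : ℝ) ^ (-k)) ^ 2 * (q : ℝ) ^ (2 * k) := by
      gcongr; exact mem_closedBall_zero_iff.1 hu
    _ = 1 := by
      rw [← zpow_natCast, ← zpow_mul, ← zpow_add₀ (by exact_mod_cast hq.out.ne_zero)]
      simp [mul_comm]
  rw [AddChar.map_add_eq_mul, hone, mul_one]

variable (μ : Measure ℚ_[q]) [μ.IsAddHaarMeasure]

theorem measure_closedBall_zpow_succ (k : ℤ) :
    μ (closedBall 0 ((q : ℝ) ^ (k + 1))) = q * μ (closedBall 0 ((q : ℝ) ^ k)) := by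
  rw [closedBall_zpow_succ_eq_biUnion, measure_biUnion_finset (pairwiseDisjoint_closedBall_zpow k)
    fun _ _ => measurableSet_closedBall]
  simp [Measure.addHaar_closedBall_center μ]

theorem measure_closedBall_zpow (hμ : μ (closedBall 0 1) = 1) (k : ℤ) :
    μ (closedBall 0 ((q : ℝ) ^ k)) = (q : ℝ≥0∞) ^ k := by
  have hq0 : (q : ℝ≥0∞) ≠ 0 := by exact_mod_cast hq.out.ne_zero
  induction k using Int.induction_on with
  | zero => simpa using hμ
  | succ k ih =>
    rw [measure_closedBall_zpow_succ, ih, ENNReal.zpow_add hq0 (ENNReal.natCast_ne_top q), zpow_one,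
      mul_comm]
  | pred k ih =>
    have h := measure_closedBall_zpow_succ μ (-k - 1)
    rw [sub_add_cancel, ih] at h
    rw [ENNReal.zpow_sub hq0 (ENNReal.natCast_ne_top q), zpow_one, h, mul_comm, ← mul_assoc,
      ENNReal.inv_mul_cancel hq0 (ENNReal.natCast_ne_top q), one_mul]

theorem measureReal_closedBall_zpow (hμ : μ (closedBall 0 1) = 1) (k : ℤ) :
    μ.real (closedBall 0 ((q : ℝ) ^ k)) = (q : ℝ) ^ k := by
  have hq0 : (q : NNReal) ≠ 0 := by exact_mod_cast hq.out.ne_zero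
  rw [measureReal_def, measure_closedBall_zpow μ hμ, ← ENNReal.coe_natCast,
    ← ENNReal.coe_zpow hq0, ENNReal.coe_toReal, NNReal.coe_zpow, NNReal.coe_natCast]

theorem setIntegral_closedBall_addChar_mul_of_norm_le (hμ : μ (closedBall 0 1) = 1)
    (ψ : AddChar ℚ_[q] ℂ) (hψ : ∀ x : ℚ_[q], ‖x‖ ≤ 1 → ψ x = 1) (k : ℤ) {t : ℚ_[q]}
    (ht : ‖t‖ ≤ (q : ℝ) ^ k) :
    ∫ u in closedBall 0 ((q : ℝ) ^ (-k)), ψ (u * t) ∂μ = (((q : ℝ) ^ (-k) : ℝ) : ℂ) := by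
  have hone : ∀ u ∈ closedBall (0 : ℚ_[q]) ((q : ℝ) ^ (-k)), ψ (u * t) = 1 := fun u hu => by
    refine hψ _ ?_
    calc ‖u * t‖ = ‖u‖ * ‖t‖ := norm_mul u t
      _ ≤ (q : ℝ) ^ (-k) * (q : ℝ) ^ k := by gcongr; exact mem_closedBall_zero_iff.1 hu
      _ = 1 := by rw [← zpow_add₀ (by exact_mod_cast hq.out.ne_zero), neg_add_cancel, zpow_zero]
  rw [setIntegral_congr_fun measurableSet_closedBall hone, setIntegral_const,
    measureReal_closedBall_zpow μ hμ, Complex.real_smul, mul_one]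

theorem setIntegral_closedBall_addChar_mul_of_lt_norm (ψ : AddChar ℚ_[q] ℂ)
    (hψ : ∃ x : ℚ_[q], ‖x‖ ≤ q ∧ ψ x ≠ 1) (k : ℤ) {t : ℚ_[q]} (ht : (q : ℝ) ^ k < ‖t‖) :
    ∫ u in closedBall 0 ((q : ℝ) ^ (-k)), ψ (u * t) ∂μ = 0 := by
  obtain ⟨z, hzq, hz⟩ := hψ
  have ht0 : t ≠ 0 := norm_pos_iff.1 ((zpow_pos (by exact_mod_cast hq.out.pos) k).trans ht)
  -- the `q`-adic norm is discrete, so `‖t‖ > q^k` forces `‖t‖ ≥ q^(k+1)`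
  have ht' : (q : ℝ) ^ (k + 1) ≤ ‖t‖ := by
    rw [← not_lt, ← norm_le_pow_iff_norm_lt_pow_add_one, not_le]; exact ht
  have hg : z / t ∈ closedBall (0 : ℚ_[q]) ((q : ℝ) ^ (-k)) := by
    rw [mem_closedBall_zero_iff, norm_div, div_le_iff₀ (norm_pos_iff.2 ht0)]
    calc ‖z‖ ≤ (q : ℝ) := hzq
      _ = (q : ℝ) ^ (-k) * (q : ℝ) ^ (k + 1) := by
        rw [← zpow_add₀ (by exact_mod_cast hq.out.ne_zero)]; simp
      _ ≤ (q : ℝ) ^ (-k) * ‖t‖ := by gcongr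
  exact (ψ.compAddMonoidHom (AddMonoidHom.mulRight t)).setIntegral_addSubgroup_eq_zero μ
    (IsUltrametricDist.closedBall_openAddSubgroup ℚ_[q]
      (zpow_pos (by exact_mod_cast hq.out.pos) (-k)))
    hg (by simpa [div_mul_cancel₀ z ht0] using hz)

end Padic

open Padic

theorem inverse_fourier_parallelogram_general (q : ℕ) [Fact q.Prime]
    (μ : Measure ℚ_[q]) [μ.IsAddHaarMeasure]
    (hμ : μ {x : ℚ_[q] | ‖x‖ ≤ 1} = 1)
    (χ : ℚ_[q] → ℂ)
    (hχ_mul : ∀ x y : ℚ_[q], χ (x + y) = χ x * χ y)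
    (hχ_triv : ∀ x : ℚ_[q], ‖x‖ ≤ 1 → χ x = 1)
    (hχ_nontriv : ∃ x : ℚ_[q], ‖x‖ ≤ (q : ℝ) ∧ χ x ≠ 1)
    (m : ℤ) (a : ℚ_[q]) (x y : ℚ_[q]) :
    ∫ p in {p : ℚ_[q] × ℚ_[q] |
        ‖p.1 - a‖ ≤ (q : ℝ) ^ (-m) ∧ ‖p.2 - p.1 ^ 2‖ ≤ (q : ℝ) ^ (-(2 * m))},
        χ (p.1 * x + p.2 * y) ∂(μ.prod μ)
      = (((q : ℝ) ^ (-(3 * m)) : ℝ) : ℂ) * χ (a * x + a ^ 2 * y) *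
          Set.indicator
            {w : ℚ_[q] × ℚ_[q] | ‖w.1 + 2 * a * w.2‖ ≤ (q : ℝ) ^ m ∧ ‖w.2‖ ≤ (q : ℝ) ^ (2 * m)}
            (fun _ => (1 : ℂ)) (x, y) := by
  obtain ⟨ψ, rfl⟩ : ∃ ψ : AddChar ℚ_[q] ℂ, ⇑ψ = χ := ⟨⟨χ, hχ_triv 0 (by simp), hχ_mul⟩, rfl⟩
  replace hμ : μ (closedBall 0 1) = 1 := by simpa [Metric.closedBall, dist_eq_norm] using hμ
  set T := {w : ℚ_[q] × ℚ_[q] | ‖w.1 + 2 * a * w.2‖ ≤ (q : ℝ) ^ m ∧ ‖w.2‖ ≤ (q : ℝ) ^ (2 * m)}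
  have hphase : ∀ u v : ℚ_[q], ψ ((u + a) * x + ((u + a) ^ 2 + v) * y) =
      ψ (a * x + a ^ 2 * y) * (ψ (u * (x + 2 * a * y) + u ^ 2 * y) * ψ (v * y)) := fun u v => by
    simp only [← AddChar.map_add_eq_mul]
    congr 1
    ring
  rw [setIntegral_parabolicBox, funext fun p : ℚ_[q] × ℚ_[q] => hphase p.1 p.2, integral_const_mul,
    setIntegral_prod_mul (fun u => ψ (u * (x + 2 * a * y) + u ^ 2 * y)) (fun v => ψ (v * y))]
  by_cases hy : ‖y‖ ≤ (q : ℝ) ^ (2 * m)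
  · rw [setIntegral_closedBall_addChar_mul_add_sq_mul μ ψ hχ_triv m _ hy,
      setIntegral_closedBall_addChar_mul_of_norm_le μ hμ ψ hχ_triv (2 * m) hy]
    by_cases hs : ‖x + 2 * a * y‖ ≤ (q : ℝ) ^ m
    · rw [setIntegral_closedBall_addChar_mul_of_norm_le μ hμ ψ hχ_triv m hs,
        indicator_of_mem (show (x, y) ∈ T from ⟨hs, hy⟩), mul_one, ← Complex.ofReal_mul,
        ← zpow_add₀ (by exact_mod_cast (Fact.out : q.Prime).ne_zero)]
      ring_nf
    · rw [setIntegral_closedBall_addChar_mul_of_lt_norm μ ψ hχ_nontriv m (not_le.1 hs),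
        indicator_of_notMem (show (x, y) ∉ T from fun h => hs h.1)]
      simp
  · rw [setIntegral_closedBall_addChar_mul_of_lt_norm μ ψ hχ_nontriv (2 * m) (not_le.1 hy),
      indicator_of_notMem (show (x, y) ∉ T from fun h => hy h.2)]
    simp

/-- With `R = q^{2m}`, `P = {(ξ,η) : |ξ - a| ≤ R^{-1/2}, |η - ξ²| ≤ R^{-1}}` and
`T = {(x,y) : |x + 2ay| ≤ R^{1/2}, |y| ≤ R}`, one has
`∫_P χ(ξx + ηy) dμ²(ξ,η) = R^{-3/2} χ(ax + a²y) 1_T(x,y)`. -/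
theorem inverse_fourier_parallelogram (q : ℕ) [Fact q.Prime] (hq2 : q ≠ 2)
    (μ : Measure ℚ_[q]) [μ.IsAddHaarMeasure] [SigmaFinite μ]
    (hμ : μ {x : ℚ_[q] | ‖x‖ ≤ 1} = 1)
    (χ : ℚ_[q] → ℂ)
    (hχ_mul : ∀ x y : ℚ_[q], χ (x + y) = χ x * χ y)
    (hχ_norm : ∀ x : ℚ_[q], ‖χ x‖ = 1)
    (hχ_triv : ∀ x : ℚ_[q], ‖x‖ ≤ 1 → χ x = 1)
    (hχ_nontriv : ∃ x : ℚ_[q], ‖x‖ ≤ (q : ℝ) ∧ χ x ≠ 1)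
    (m : ℤ) (a : ℚ_[q]) (x y : ℚ_[q]) :
    ∫ p in {p : ℚ_[q] × ℚ_[q] |
        ‖p.1 - a‖ ≤ (q : ℝ) ^ (-m) ∧ ‖p.2 - p.1 ^ 2‖ ≤ (q : ℝ) ^ (-(2 * m))},
        χ (p.1 * x + p.2 * y) ∂(μ.prod μ)
      = (((q : ℝ) ^ (-(3 * m)) : ℝ) : ℂ) * χ (a * x + a ^ 2 * y) *
          Set.indicator
            {w : ℚ_[q] × ℚ_[q] | ‖w.1 + 2 * a * w.2‖ ≤ (q : ℝ) ^ m ∧ ‖w.2‖ ≤ (q : ℝ) ^ (2 * m)}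
            (fun _ => (1 : ℂ)) (x, y) :=
  inverse_fourier_parallelogram_general q μ hμ χ hχ_mul hχ_triv hχ_nontriv m a x y
end

section
/- Let R = q^{2A} with A ∈ ℕ, A ≥ 1, let a ∈ ℤ_q, and let T := {(x,y) ∈ ℚ_q² : |x + 2ay| ≤ R^{1/2}, |y| ≤ R}. Then every translate v + T (v ∈ ℚ_q²) is the union of exactly R^{1/2} pairwise disjoint squares of side length R^{1/2}, where a square of side length q^s is a set of the form {w ∈ ℚ_q² : |w − c| ≤ q^s} with c ∈ ℚ_q² and |(x,y)| := max(|x|,|y|). -/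
/-!
The shear `(x, y) ↦ (x + 2a y, y)` is an isometry of `ℚ_q²` for the sup norm because `|2a| ≤ 1`,
so it suffices to split the ball `|y| ≤ q^{2A}` of `ℚ_q` into the `q^A` disjoint balls of radius
`q^A` centred at `i q^{-2A}`, `0 ≤ i < q^A`. After scaling by `q^{2A}` this is the statement that
the residues `0, …, q^A - 1` represent `ℤ_q / q^A ℤ_q` exactly once each.
-/

open IsUltrametricDist

section Shear

variable {K : Type*} [SeminormedRing K] [IsUltrametricDist K] {b : K} {r : ℝ}

theorem norm_add_mul_le_of_norm_sub_le (hb : ‖b‖ ≤ 1) {x y y' : K} (hy : ‖y - y'‖ ≤ r)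
    (hx : ‖x + b * y‖ ≤ r) : ‖x + b * y'‖ ≤ r := by
  have hby : ‖b * (y - y')‖ ≤ r :=
    (norm_mul_le _ _).trans ((mul_le_of_le_one_left (norm_nonneg _) hb).trans hy)
  calc ‖x + b * y'‖ = ‖(x + b * y) + -(b * (y - y'))‖ := by congr 1; noncomm_ring
    _ ≤ r := (norm_add_le_max _ _).trans (max_le hx (by rwa [norm_neg]))

theorem norm_sub_shear_le_iff (hb : ‖b‖ ≤ 1) (u : K × K) (s : K) :
    ‖u - (-(b * s), s)‖ ≤ r ↔ ‖u.1 + b * u.2‖ ≤ r ∧ ‖u.2 - s‖ ≤ r := by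
  simp only [norm_prod_le_iff, Prod.fst_sub, Prod.snd_sub, sub_neg_eq_add]
  refine ⟨fun ⟨h₁, h₂⟩ => ⟨?_, h₂⟩, fun ⟨h₁, h₂⟩ => ⟨?_, h₂⟩⟩
  · exact norm_add_mul_le_of_norm_sub_le hb (by rwa [← norm_neg, neg_sub]) h₁
  · exact norm_add_mul_le_of_norm_sub_le hb h₂ h₁

end Shear

namespace Padic

variable {p : ℕ} [Fact p.Prime]

theorem norm_le_one_iff_exists_natCast_lt (z : ℚ_[p]) (n : ℕ) :
    ‖z‖ ≤ 1 ↔ ∃ i : Fin (p ^ n), ‖z - (i : ℕ)‖ ≤ (p : ℝ) ^ (-n : ℤ) := by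
  constructor
  · intro hz
    set x : ℤ_[p] := ⟨z, hz⟩
    refine ⟨⟨x.appr n, x.appr_lt n⟩, ?_⟩
    have := (PadicInt.norm_le_pow_iff_mem_span_pow _ n).2 (PadicInt.appr_spec n x)
    rwa [PadicInt.norm_def] at this
  · rintro ⟨i, hi⟩
    calc ‖z‖ = ‖(z - (i : ℕ)) + (i : ℕ)‖ := by rw [sub_add_cancel]
      _ ≤ 1 := (norm_add_le_max _ _).trans <| max_le
          (hi.trans (zpow_le_one_of_nonpos₀ (by exact_mod_cast (Fact.out : p.Prime).one_le)
            (by omega)))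
          (norm_natCast_le_one _ _)

theorem eq_of_norm_natCast_sub_le {n i j : ℕ} (hi : i < p ^ n) (hj : j < p ^ n)
    (h : ‖(i : ℚ_[p]) - j‖ ≤ (p : ℝ) ^ (-n : ℤ)) : i = j := by
  have hdvd : ((p ^ n : ℕ) : ℤ) ∣ (i : ℤ) - j := by
    rw [Nat.cast_pow, ← norm_int_le_pow_iff_dvd]
    exact_mod_cast h
  exact (Int.natCast_modEq_iff.1 (Int.modEq_iff_dvd.2 hdvd)).symm.eq_of_lt_of_lt hi hj

theorem norm_mul_p_zpow_neg_le_iff (x : ℚ_[p]) (k e : ℤ) :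
    ‖x * (p : ℚ_[p]) ^ (-k)‖ ≤ (p : ℝ) ^ e ↔ ‖x‖ ≤ (p : ℝ) ^ (e - k) := by
  have hp : (0 : ℝ) < p := by exact_mod_cast (Fact.out : p.Prime).pos
  rw [norm_mul, norm_p_zpow, neg_neg, ← le_div_iff₀ (zpow_pos hp k), ← zpow_sub₀ hp.ne']

theorem norm_le_zpow_iff_exists_natCast_mul (y : ℚ_[p]) (k : ℤ) (n : ℕ) :
    ‖y‖ ≤ (p : ℝ) ^ k ↔
      ∃ i : Fin (p ^ n), ‖y - (i : ℕ) * (p : ℚ_[p]) ^ (-k)‖ ≤ (p : ℝ) ^ (k - n) := by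
  have hp : (p : ℚ_[p]) ≠ 0 := by exact_mod_cast (Fact.out : p.Prime).ne_zero
  obtain ⟨z, rfl⟩ : ∃ z : ℚ_[p], y = z * (p : ℚ_[p]) ^ (-k) :=
    ⟨y * (p : ℚ_[p]) ^ k, by rw [mul_assoc, ← zpow_add₀ hp, add_neg_cancel, zpow_zero, mul_one]⟩
  simp_rw [← sub_mul, norm_mul_p_zpow_neg_le_iff, sub_self, sub_sub_cancel_left, zpow_zero]
  exact norm_le_one_iff_exists_natCast_lt z n

theorem eq_of_norm_sub_natCast_mul_le {k : ℤ} {n i j : ℕ} (hi : i < p ^ n) (hj : j < p ^ n)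
    {y : ℚ_[p]} (hyi : ‖y - i * (p : ℚ_[p]) ^ (-k)‖ ≤ (p : ℝ) ^ (k - n))
    (hyj : ‖y - j * (p : ℚ_[p]) ^ (-k)‖ ≤ (p : ℝ) ^ (k - n)) : i = j := by
  refine eq_of_norm_natCast_sub_le hi hj ?_
  have : ‖((i : ℚ_[p]) - j) * (p : ℚ_[p]) ^ (-k)‖ ≤ (p : ℝ) ^ (k - n) :=
    calc _ = ‖(y - j * (p : ℚ_[p]) ^ (-k)) + -(y - i * (p : ℚ_[p]) ^ (-k))‖ := by congr 1; ring
      _ ≤ _ := (norm_add_le_max _ _).trans (max_le hyj (by rwa [norm_neg]))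
  rwa [norm_mul_p_zpow_neg_le_iff, sub_sub_cancel_left] at this

end Padic

theorem translate_union_of_squares_general (q : ℕ) [Fact q.Prime]
    (A : ℕ) (a : ℚ_[q]) (ha : ‖a‖ ≤ 1) (v : ℚ_[q] × ℚ_[q]) :
    ∃ c : Fin (q ^ A) → ℚ_[q] × ℚ_[q],
      ({w : ℚ_[q] × ℚ_[q] |
          ‖(w - v).1 + 2 * a * (w - v).2‖ ≤ (q : ℝ) ^ (A : ℤ) ∧
          ‖(w - v).2‖ ≤ (q : ℝ) ^ ((2 * A : ℕ) : ℤ)}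
        = ⋃ i, {w : ℚ_[q] × ℚ_[q] | ‖w - c i‖ ≤ (q : ℝ) ^ (A : ℤ)}) ∧
      Pairwise fun i j =>
        Disjoint {w : ℚ_[q] × ℚ_[q] | ‖w - c i‖ ≤ (q : ℝ) ^ (A : ℤ)}
          {w : ℚ_[q] × ℚ_[q] | ‖w - c j‖ ≤ (q : ℝ) ^ (A : ℤ)} := by
  have h2a : ‖2 * a‖ ≤ 1 :=
    (norm_mul_le _ _).trans (mul_le_one₀ (by exact_mod_cast norm_natCast_le_one ℚ_[q] 2)
      (norm_nonneg _) ha)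
  have hexp : ((2 * A : ℕ) : ℤ) - A = A := by push_cast; ring
  set s : ℚ_[q] := (q : ℚ_[q]) ^ (-((2 * A : ℕ) : ℤ))
  have hsquare (i : ℕ) (w : ℚ_[q] × ℚ_[q]) :
      ‖w - (v + (-(2 * a * (i * s)), i * s))‖ ≤ (q : ℝ) ^ (A : ℤ) ↔
        ‖(w - v).1 + 2 * a * (w - v).2‖ ≤ (q : ℝ) ^ (A : ℤ) ∧
          ‖(w - v).2 - i * s‖ ≤ (q : ℝ) ^ (A : ℤ) := by
    rw [← sub_sub]; exact norm_sub_shear_le_iff h2a _ _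
  refine ⟨fun i => v + (-(2 * a * ((i : ℕ) * s)), (i : ℕ) * s), ?_, fun i j hij => ?_⟩
  · ext w
    simp only [Set.mem_ofPred_eq, Set.mem_iUnion, hsquare, exists_and_left]
    rw [Padic.norm_le_zpow_iff_exists_natCast_mul (w - v).2 _ A, hexp]
  · refine Set.disjoint_left.2 fun w hi hj => hij (Fin.ext ?_)
    rw [Set.mem_ofPred_eq, hsquare, ← hexp] at hi hj
    exact Padic.eq_of_norm_sub_natCast_mul_le i.2 j.2 hi.2 hj.2

/-- With `R = q^{2A}`, `a ∈ ℤ_q` and `T = {(x,y) : |x + 2ay| ≤ R^{1/2}, |y| ≤ R}`, every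
translate `v + T` is the union of exactly `R^{1/2}` pairwise disjoint squares of side
length `R^{1/2}` (squares for the sup-norm `|(x,y)| = max(|x|,|y|)` on `ℚ_q²`). -/
theorem translate_union_of_squares (q : ℕ) [Fact q.Prime] (hq2 : q ≠ 2)
    (A : ℕ) (hA : 1 ≤ A) (a : ℚ_[q]) (ha : ‖a‖ ≤ 1) (v : ℚ_[q] × ℚ_[q]) :
    ∃ c : Fin (q ^ A) → ℚ_[q] × ℚ_[q],
      ({w : ℚ_[q] × ℚ_[q] |
          ‖(w - v).1 + 2 * a * (w - v).2‖ ≤ (q : ℝ) ^ (A : ℤ) ∧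
          ‖(w - v).2‖ ≤ (q : ℝ) ^ ((2 * A : ℕ) : ℤ)}
        = ⋃ i, {w : ℚ_[q] × ℚ_[q] | ‖w - c i‖ ≤ (q : ℝ) ^ (A : ℤ)}) ∧
      Pairwise fun i j =>
        Disjoint {w : ℚ_[q] × ℚ_[q] | ‖w - c i‖ ≤ (q : ℝ) ^ (A : ℤ)}
          {w : ℚ_[q] × ℚ_[q] | ‖w - c j‖ ≤ (q : ℝ) ^ (A : ℤ)} :=
  translate_union_of_squares_general q A a ha v
end

section
/- Let t ∈ ℕ with t ≥ 1, and let a_1, …, a_{q^t} be real numbers. Then ∫_{{(x₁,x₂) ∈ ℚ_q² : max(|x₁|,|x₂|) ≤ q^{10t}}} |∑_{n=1}^{q^t} a_n χ(n x₁ + n² x₂)|⁶ dμ²(x₁,x₂) = q^{20t} ∫_{[0,1]²} |∑_{n=1}^{q^t} a_n e(n y₁ + n² y₂)|⁶ dy₁ dy₂, where in the q-adic integrand the natural numbers n and n² are regarded as elements of ℤ_q via the canonical embedding, and e(z) := e^{2πiz}. -/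
/-!
Expanding the sixth power, both sides become sums over sextuples `(m, n) ∈ [1, q^t]^6` of
`a(m₁)a(m₂)a(m₃)a(n₁)a(n₂)a(n₃)` times the integral of the character with frequency
`(∑ mᵢ - ∑ nᵢ, ∑ mᵢ² - ∑ nᵢ²) ∈ ℤ²`. Over `[0,1]²` that integral is the indicator of a zero
frequency. Over the `q`-adic box of radius `q^{10t}` it is `q^{20t}` times the same indicator:
a nonzero frequency coordinate has size at most `3q^{2t} < q^{10t}`, so `x ↦ χ(mx)` is a
nontrivial character on the ball (an additive subgroup) and integrates to zero there, while the
ball is a disjoint union of `q^{10t}` translates of `ℤ_q`.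
-/

open MeasureTheory Finset Filter Topology

namespace AddChar

variable {G M : Type*} [AddCommGroup G] [CommMonoid M]

lemma map_sum_eq_prod {ι : Type*} (ψ : AddChar G M) (s : Finset ι) (f : ι → G) :
    ψ (∑ i ∈ s, f i) = ∏ i ∈ s, ψ (f i) := by
  simpa [← ofAdd_sum] using map_prod ψ.toMonoidHom (fun i ↦ Multiplicative.ofAdd (f i)) s

lemma map_neg_eq_conj_of_norm_eq_one (ψ : AddChar G ℂ) {g : G} (hψ : ‖ψ g‖ = 1) :
    ψ (-g) = starRingEnd ℂ (ψ g) := by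
  rw [map_neg_eq_inv, RCLike.inv_eq_conj hψ]

lemma continuous_of_eventually_eq_one [TopologicalSpace G] [IsTopologicalAddGroup G]
    [TopologicalSpace M] (ψ : AddChar G M) (hψ : ∀ᶠ x in 𝓝 0, ψ x = 1) : Continuous ψ := by
  refine continuous_iff_continuousAt.2 fun x ↦ EventuallyEq.continuousAt (y := ψ x) ?_
  have hsub : Tendsto (fun y ↦ y - x) (𝓝 x) (𝓝 0) := by
    simpa using (continuous_sub_right x).tendsto x
  filter_upwards [hsub.eventually hψ] with y hy
  rw [← sub_add_cancel y x, map_add_eq_mul, hy, one_mul]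

lemma setIntegral_addSubgroup_eq_zero_s11 [MeasurableSpace G] [MeasurableAdd G] (μ : Measure G)
    [μ.IsAddRightInvariant] {H : AddSubgroup G} (hH : MeasurableSet (H : Set G))
    (ψ : AddChar G ℂ) {y : G} (hy : y ∈ H) (hψy : ψ y ≠ 1) : ∫ x in H, ψ x ∂μ = 0 := by
  have hshift : ∀ x, (H : Set G).indicator ψ (x + y) = ψ y * (H : Set G).indicator ψ x := by
    intro x
    by_cases hx : x ∈ H
    · simp [hx, H.add_mem hx hy, map_add_eq_mul, mul_comm]
    · simp [hx, (H.add_mem_cancel_right hy).not.mpr hx]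
  have hfix : ∫ x in H, ψ x ∂μ = ψ y * ∫ x in H, ψ x ∂μ := by
    calc ∫ x in H, ψ x ∂μ = ∫ x, (H : Set G).indicator ψ (x + y) ∂μ := by
          rw [integral_add_right_eq_self, integral_indicator hH]
      _ = ψ y * ∫ x in H, ψ x ∂μ := by simp only [hshift, integral_const_mul, integral_indicator hH]
  have : (1 - ψ y) * ∫ x in H, ψ x ∂μ = 0 := by rw [sub_mul, ← hfix]; ring
  exact (mul_eq_zero.mp this).resolve_left (sub_ne_zero.mpr (Ne.symm hψy))

variable {R : Type*} [AddCommGroup R]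

def pairing (ψ : AddChar R M) (x : R × R) : AddChar (ℤ × ℤ) M where
  toFun m := ψ (m.1 • x.1 + m.2 • x.2)
  map_zero_eq_one' := by simp
  map_add_eq_mul' m n := by
    rw [← map_add_eq_mul]
    congr 1
    simp only [Prod.fst_add, Prod.snd_add, add_smul]
    abel

@[simp]
lemma pairing_apply (ψ : AddChar R M) (x : R × R) (m : ℤ × ℤ) :
    ψ.pairing x m = ψ (m.1 • x.1 + m.2 • x.2) :=
  rfl

lemma integral_pairing_prod [MeasurableSpace R] (ν₁ ν₂ : Measure R)
    [SFinite ν₁] [SFinite ν₂] (ψ : AddChar R ℂ) (m : ℤ × ℤ) :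
    ∫ x, ψ.pairing x m ∂ν₁.prod ν₂ = (∫ r, ψ (m.1 • r) ∂ν₁) * ∫ r, ψ (m.2 • r) ∂ν₂ := by
  simp only [pairing_apply, map_add_eq_mul]
  exact integral_prod_mul (fun r ↦ ψ (m.1 • r)) fun r ↦ ψ (m.2 • r)

end AddChar

section Energy

variable {ι G : Type*} [AddCommGroup G]

def weightedAdditiveEnergy [DecidableEq G] (I : Finset ι) (a : ι → ℝ) (v : ι → G) (s : ℕ) : ℝ :=
  ∑ m ∈ Fintype.piFinset fun _ : Fin s ↦ I, ∑ n ∈ Fintype.piFinset fun _ : Fin s ↦ I,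
    if ∑ i, v (m i) = ∑ i, v (n i) then (∏ i, a (m i)) * ∏ i, a (n i) else 0

lemma AddChar.norm_sum_mul_pow_eq (ψ : AddChar G ℂ) (hψ : ∀ g, ‖ψ g‖ = 1)
    (I : Finset ι) (a : ι → ℝ) (v : ι → G) (s : ℕ) :
    ((‖∑ n ∈ I, a n * ψ (v n)‖ ^ (2 * s) : ℝ) : ℂ) =
      ∑ m ∈ Fintype.piFinset fun _ : Fin s ↦ I, ∑ n ∈ Fintype.piFinset fun _ : Fin s ↦ I,
        (((∏ i, a (m i)) * ∏ i, a (n i) : ℝ) : ℂ) * ψ (∑ i, v (m i) - ∑ i, v (n i)) := by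
  have hpow : (∑ n ∈ I, a n * ψ (v n)) ^ s = ∑ m ∈ Fintype.piFinset fun _ : Fin s ↦ I,
      ((∏ i, a (m i) : ℝ) : ℂ) * ψ (∑ i, v (m i)) := by
    simp only [sum_pow', prod_mul_distrib, ψ.map_sum_eq_prod, Complex.ofReal_prod]
  rw [pow_mul', ← norm_pow, Complex.ofReal_pow, ← Complex.mul_conj', hpow, map_sum, sum_mul_sum]
  refine sum_congr rfl fun m _ ↦ sum_congr rfl fun n _ ↦ ?_
  rw [map_mul, Complex.conj_ofReal, ← ψ.map_neg_eq_conj_of_norm_eq_one (hψ _), sub_eq_add_neg,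
    AddChar.map_add_eq_mul]
  push_cast
  ring

variable {X : Type*} [MeasurableSpace X]

theorem integral_norm_sum_mul_pow_eq [DecidableEq G] (ν : Measure X) [IsFiniteMeasure ν]
    (e : X → AddChar G ℂ) (he_norm : ∀ x g, ‖e x g‖ = 1) (he_meas : ∀ g, AEStronglyMeasurable (fun x ↦ e x g) ν)
    (I : Finset ι) (a : ι → ℝ) (v : ι → G) (s : ℕ)
    (horth : ∀ m ∈ Fintype.piFinset (fun _ : Fin s ↦ I), ∀ n ∈ Fintype.piFinset (fun _ : Fin s ↦ I),
      ∑ i, v (m i) ≠ ∑ i, v (n i) → ∫ x, e x (∑ i, v (m i) - ∑ i, v (n i)) ∂ν = 0) :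
    ∫ x, ‖∑ n ∈ I, a n * e x (v n)‖ ^ (2 * s) ∂ν =
      ν.real Set.univ * weightedAdditiveEnergy I a v s := by
  have hint : ∀ g, Integrable (fun x ↦ e x g) ν := fun g ↦
    .of_bound (he_meas g) 1 (.of_forall fun x ↦ (he_norm x g).le)
  apply Complex.ofReal_injective
  rw [← integral_complex_ofReal]
  simp only [fun x ↦ (e x).norm_sum_mul_pow_eq (he_norm x) I a v s]
  rw [integral_finsetSum _ fun m _ ↦ integrable_finsetSum _ fun n _ ↦ (hint _).const_mul _]
  simp only [integral_finsetSum _ fun n _ ↦ (hint _).const_mul _, integral_const_mul,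
    weightedAdditiveEnergy, Complex.ofReal_mul, Complex.ofReal_sum, mul_sum]
  refine sum_congr rfl fun m hm ↦ sum_congr rfl fun n hn ↦ ?_
  by_cases h : ∑ i, v (m i) = ∑ i, v (n i)
  · simp [h, mul_comm]
  · simp [h, horth m hm n hn h]

end Energy

lemma abs_sum_sub_sum_le {s : ℕ} {f g : Fin s → ℤ} {C : ℤ} (hf : ∀ i, 0 ≤ f i ∧ f i ≤ C)
    (hg : ∀ i, 0 ≤ g i ∧ g i ≤ C) : |∑ i, f i - ∑ i, g i| ≤ s * C := by
  have hbound : ∀ h : Fin s → ℤ, (∀ i, 0 ≤ h i ∧ h i ≤ C) → 0 ≤ ∑ i, h i ∧ ∑ i, h i ≤ s * C := by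
    intro h hh
    refine ⟨sum_nonneg fun i _ ↦ (hh i).1, ?_⟩
    simpa using sum_le_card_nsmul univ h C fun i _ ↦ (hh i).2
  obtain ⟨hf₀, hf₁⟩ := hbound f hf
  obtain ⟨hg₀, hg₁⟩ := hbound g hg
  exact abs_sub_le_of_nonneg_of_le hf₀ hf₁ hg₀ hg₁

theorem integral_prod_norm_quadratic_sum_pow_eq {R : Type*} [AddCommGroup R] [TopologicalSpace R]
    [IsTopologicalAddGroup R] [SecondCountableTopology R] [MeasurableSpace R] [BorelSpace R]
    (ν₁ ν₂ : Measure R) [IsFiniteMeasure ν₁] [IsFiniteMeasure ν₂] (ψ : AddChar R ℂ)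
    (hψ_cont : Continuous ψ) (hψ_norm : ∀ r, ‖ψ r‖ = 1) (s Q : ℕ) (I : Finset ℕ)
    (hI : ∀ n ∈ I, n ≤ Q) (a : ℕ → ℝ)
    (horth₁ : ∀ m : ℤ, m ≠ 0 → |m| ≤ s * Q ^ 2 → ∫ r, ψ (m • r) ∂ν₁ = 0)
    (horth₂ : ∀ m : ℤ, m ≠ 0 → |m| ≤ s * Q ^ 2 → ∫ r, ψ (m • r) ∂ν₂ = 0) :
    ∫ x, ‖∑ n ∈ I, a n * ψ ((n : ℤ) • x.1 + ((n : ℤ) ^ 2) • x.2)‖ ^ (2 * s) ∂ν₁.prod ν₂ =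
      ν₁.real Set.univ * ν₂.real Set.univ *
        weightedAdditiveEnergy I a (fun n ↦ ((n : ℤ), (n : ℤ) ^ 2)) s := by
  have hmeas : ∀ m : ℤ × ℤ, AEStronglyMeasurable (fun x ↦ ψ.pairing x m) (ν₁.prod ν₂) := by
    intro m
    exact (hψ_cont.comp (by fun_prop)).aestronglyMeasurable
  have hcoord : ∀ m ∈ Fintype.piFinset (fun _ : Fin s ↦ I), ∀ i,
      (0 ≤ (m i : ℤ) ∧ (m i : ℤ) ≤ Q ^ 2) ∧ (0 ≤ (m i : ℤ) ^ 2 ∧ (m i : ℤ) ^ 2 ≤ Q ^ 2) := by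
    intro m hm i
    have hle : (m i : ℤ) ≤ Q := by exact_mod_cast hI _ (Fintype.mem_piFinset.mp hm i)
    refine ⟨⟨by positivity, ?_⟩, by positivity, by gcongr⟩
    nlinarith
  rw [← measureReal_prod_prod, Set.univ_prod_univ]
  refine integral_norm_sum_mul_pow_eq (ν₁.prod ν₂) ψ.pairing (fun x g ↦ hψ_norm _) hmeas I a
    (fun n ↦ ((n : ℤ), (n : ℤ) ^ 2)) s fun m hm n hn hne ↦ ?_
  rw [AddChar.integral_pairing_prod ν₁ ν₂]
  simp only [Prod.fst_sub, Prod.snd_sub, Prod.fst_sum, Prod.snd_sum]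
  by_cases h₁ : ∑ i, (m i : ℤ) - ∑ i, (n i : ℤ) = 0
  · refine mul_eq_zero_of_right _ (horth₂ _ (fun h₂ ↦ hne ?_) ?_)
    · ext <;> simp only [Prod.fst_sum, Prod.snd_sum] <;> linarith
    · exact abs_sum_sub_sum_le (fun i ↦ (hcoord m hm i).2) fun i ↦ (hcoord n hn i).2
  · exact mul_eq_zero_of_left (horth₁ _ h₁
      (abs_sum_sub_sum_le (fun i ↦ (hcoord m hm i).1) fun i ↦ (hcoord n hn i).1)) _

namespace Padic

variable {q : ℕ} [Fact q.Prime]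

open Metric

lemma norm_div_prime_pow (x : ℚ_[q]) (N : ℕ) : ‖x / (q : ℚ_[q]) ^ N‖ = ‖x‖ * (q : ℝ) ^ N := by
  rw [norm_div, norm_p_pow, zpow_neg, zpow_natCast, div_inv_eq_mul]

lemma exists_norm_sub_natCast_div_le_one {x : ℚ_[q]} {N : ℕ} (hx : ‖x‖ ≤ (q : ℝ) ^ N) :
    ∃ k < q ^ N, ‖x - k / (q : ℚ_[q]) ^ N‖ ≤ 1 := by
  have hqN : (0 : ℝ) < (q : ℝ) ^ N := pow_pos (mod_cast (Fact.out : q.Prime).pos) N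
  have hz : ‖x * (q : ℚ_[q]) ^ N‖ ≤ 1 := by
    rwa [norm_mul, norm_p_pow, zpow_neg, zpow_natCast, ← div_eq_mul_inv, div_le_one hqN]
  set z : ℤ_[q] := ⟨x * (q : ℚ_[q]) ^ N, hz⟩
  refine ⟨z.appr N, z.appr_lt N, ?_⟩
  have happr : ‖z - z.appr N‖ ≤ ((q : ℝ) ^ N)⁻¹ := by
    simpa using (PadicInt.norm_le_pow_iff_mem_span_pow _ N).mpr (z.appr_spec N)
  have hdiff : x - z.appr N / (q : ℚ_[q]) ^ N =
      ((z - z.appr N : ℤ_[q]) : ℚ_[q]) / (q : ℚ_[q]) ^ N := by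
    have hq : (q : ℚ_[q]) ^ N ≠ 0 := pow_ne_zero _ (mod_cast (Fact.out : q.Prime).ne_zero)
    rw [PadicInt.coe_sub, PadicInt.coe_natCast, sub_div,
      show (z : ℚ_[q]) = x * (q : ℚ_[q]) ^ N from rfl, mul_div_cancel_right₀ _ hq]
  rw [hdiff, norm_div_prime_pow, ← PadicInt.norm_def, ← le_div_iff₀ hqN, one_div]
  exact happr

lemma one_lt_norm_natCast_div_sub {k l N : ℕ} (hk : k < q ^ N) (hl : l < q ^ N) (hkl : k ≠ l) :
    1 < ‖(k : ℚ_[q]) / (q : ℚ_[q]) ^ N - l / (q : ℚ_[q]) ^ N‖ := by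
  have hk' : (k : ℤ) < (q : ℤ) ^ N := by exact_mod_cast hk
  have hl' : (l : ℤ) < (q : ℤ) ^ N := by exact_mod_cast hl
  have hndvd : ¬ (q : ℤ) ^ N ∣ (k - l : ℤ) := fun hdvd ↦ hkl <| by
    have := Int.eq_zero_of_abs_lt_dvd hdvd
      (abs_sub_lt_of_nonneg_of_lt (by omega) hk' (by omega) hl')
    omega
  rw [← norm_int_le_pow_iff_dvd, not_le, zpow_neg, zpow_natCast,
    inv_lt_iff_one_lt_mul₀ (pow_pos (mod_cast (Fact.out : q.Prime).pos) N)] at hndvd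
  rw [← sub_div, norm_div_prime_pow]
  exact_mod_cast hndvd

theorem measure_closedBall_prime_pow (μ : Measure ℚ_[q]) [μ.IsAddHaarMeasure] (N : ℕ) :
    μ (closedBall 0 ((q : ℝ) ^ N)) = q ^ N * μ (closedBall 0 1) := by
  set c : ℕ → ℚ_[q] := fun k ↦ k / (q : ℚ_[q]) ^ N
  have hcover : closedBall 0 ((q : ℝ) ^ N) = ⋃ k ∈ range (q ^ N), closedBall (c k) 1 := by
    ext x
    simp only [mem_closedBall, dist_eq_norm, sub_zero, Set.mem_iUnion, mem_range, exists_prop]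
    refine ⟨exists_norm_sub_natCast_div_le_one, fun ⟨k, _, hxk⟩ ↦ ?_⟩
    have hck : ‖c k‖ ≤ (q : ℝ) ^ N := by
      rw [norm_div_prime_pow]
      exact mul_le_of_le_one_left (by positivity) (by simpa using norm_int_le_one (p := q) k)
    calc ‖x‖ = ‖(x - c k) + c k‖ := by rw [sub_add_cancel]
      _ ≤ max ‖x - c k‖ ‖c k‖ := nonarchimedean _ _
      _ ≤ (q : ℝ) ^ N := max_le (hxk.trans (one_le_pow₀ (by exact_mod_cast
          (Fact.out : q.Prime).one_le))) hck
  have hdisj : (range (q ^ N) : Set ℕ).PairwiseDisjoint fun k ↦ closedBall (c k) 1 := by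
    intro k hk l hl hkl
    refine Set.disjoint_left.2 fun x hxk hxl ↦
      (one_lt_norm_natCast_div_sub (mem_range.1 hk) (mem_range.1 hl) hkl).not_ge ?_
    rw [← dist_eq_norm]
    exact (IsUltrametricDist.dist_triangle_max _ x _).trans
      (max_le (by rwa [dist_comm]) hxl)
  rw [hcover, measure_biUnion_finset hdisj fun _ _ ↦ measurableSet_closedBall]
  simp [Measure.addHaar_closedBall_center]

lemma zpow_one_sub_le_norm_intCast {m : ℤ} {N : ℕ} (h : ¬ (q : ℤ) ^ N ∣ m) :
    (q : ℝ) ^ (1 - (N : ℤ)) ≤ ‖(m : ℚ_[q])‖ := by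
  rwa [← norm_int_le_pow_iff_dvd, norm_le_pow_iff_norm_lt_pow_add_one, not_lt,
    neg_add_eq_sub] at h

theorem setIntegral_closedBall_addChar_mul_eq_zero (μ : Measure ℚ_[q]) [μ.IsAddRightInvariant]
    (ψ : AddChar ℚ_[q] ℂ) (hψ : ∃ x : ℚ_[q], ‖x‖ ≤ q ∧ ψ x ≠ 1) (N : ℕ) {c : ℚ_[q]}
    (hc : (q : ℝ) ^ (1 - (N : ℤ)) ≤ ‖c‖) :
    ∫ x in closedBall 0 ((q : ℝ) ^ N), ψ (c * x) ∂μ = 0 := by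
  obtain ⟨x₀, hx₀, hψx₀⟩ := hψ
  have hq : (0 : ℝ) < q := mod_cast (Fact.out : q.Prime).pos
  have hc₀ : c ≠ 0 := norm_pos_iff.mp ((zpow_pos hq _).trans_le hc)
  have hmem : x₀ / c ∈ closedBall 0 ((q : ℝ) ^ N) := by
    rw [mem_closedBall_zero_iff, norm_div, div_le_iff₀ (norm_pos_iff.2 hc₀)]
    calc ‖x₀‖ ≤ q := hx₀
      _ = (q : ℝ) ^ N * (q : ℝ) ^ (1 - (N : ℤ)) := by
        rw [← zpow_natCast, ← zpow_add₀ hq.ne']; simp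
      _ ≤ (q : ℝ) ^ N * ‖c‖ := by gcongr
  exact (ψ.mulShift c).setIntegral_addSubgroup_eq_zero_s11 μ
    (H := (IsUltrametricDist.closedBall_openAddSubgroup ℚ_[q] (by positivity)).toAddSubgroup)
    measurableSet_closedBall hmem (by simpa [mul_div_cancel₀ _ hc₀] using hψx₀)

theorem setIntegral_prod_norm_quadratic_sum_pow_eq (μ : Measure ℚ_[q]) [μ.IsAddHaarMeasure]
    (hμ : μ (closedBall 0 1) = 1) (ψ : AddChar ℚ_[q] ℂ) (hψ_norm : ∀ x, ‖ψ x‖ = 1)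
    (hψ_triv : ∀ x : ℚ_[q], ‖x‖ ≤ 1 → ψ x = 1) (hψ_nontriv : ∃ x : ℚ_[q], ‖x‖ ≤ q ∧ ψ x ≠ 1)
    (s Q N : ℕ) (hQN : s * Q ^ 2 < q ^ N) (I : Finset ℕ) (hI : ∀ n ∈ I, n ≤ Q) (a : ℕ → ℝ) :
    ∫ x in closedBall 0 ((q : ℝ) ^ N) ×ˢ closedBall 0 ((q : ℝ) ^ N),
        ‖∑ n ∈ I, a n * ψ ((n : ℚ_[q]) * x.1 + (n : ℚ_[q]) ^ 2 * x.2)‖ ^ (2 * s) ∂μ.prod μ =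
      (q : ℝ) ^ N * (q : ℝ) ^ N *
        weightedAdditiveEnergy I a (fun n ↦ ((n : ℤ), (n : ℤ) ^ 2)) s := by
  set B := closedBall (0 : ℚ_[q]) ((q : ℝ) ^ N)
  have : IsFiniteMeasure (μ.restrict B) := isFiniteMeasure_restrict.2 measure_closedBall_lt_top.ne
  have hψ_cont : Continuous ψ := ψ.continuous_of_eventually_eq_one <|
    eventually_of_mem (closedBall_mem_nhds 0 one_pos) fun x hx ↦
      hψ_triv x (mem_closedBall_zero_iff.mp hx)
  have hB : (μ.restrict B).real Set.univ = (q : ℝ) ^ N := by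
    simp [B, Measure.real, measure_closedBall_prime_pow, hμ]
  have horth : ∀ m : ℤ, m ≠ 0 → |m| ≤ s * Q ^ 2 → ∫ r in B, ψ (m • r) ∂μ = 0 := by
    intro m hm hmQ
    simp only [zsmul_eq_mul]
    refine setIntegral_closedBall_addChar_mul_eq_zero μ ψ hψ_nontriv _
      (zpow_one_sub_le_norm_intCast fun hdvd ↦ hm (Int.eq_zero_of_abs_lt_dvd hdvd ?_))
    exact hmQ.trans_lt (mod_cast hQN)
  have h := integral_prod_norm_quadratic_sum_pow_eq (μ.restrict B) (μ.restrict B) ψ hψ_cont hψ_norm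
    s Q I hI a horth horth
  simpa [Measure.prod_restrict, hB, zsmul_eq_mul] using h

end Padic

lemma setIntegral_Icc_fourierChar_zsmul_eq_zero {m : ℤ} (hm : m ≠ 0) :
    ∫ y in Set.Icc (0 : ℝ) 1, (Real.fourierChar (m • y) : ℂ) = 0 := by
  set c : ℂ := 2 * Real.pi * m * Complex.I
  have hc : c ≠ 0 := by simp [c, hm, Real.pi_ne_zero]
  have hexp : ∀ y : ℝ, (Real.fourierChar (m • y) : ℂ) = Complex.exp (c * y) := fun y ↦ by
    rw [Real.fourierChar_apply, zsmul_eq_mul]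
    congr 1
    push_cast
    ring
  simp only [hexp]
  rw [integral_Icc_eq_integral_Ioc, ← intervalIntegral.integral_of_le zero_le_one,
    integral_exp_mul_complex hc]
  have hperiod : Complex.exp c = 1 := by
    rw [show c = m * (2 * Real.pi * Complex.I) by ring]
    exact Complex.exp_int_mul_two_pi_mul_I m
  simp [hperiod]

theorem setIntegral_unitSquare_norm_quadratic_sum_pow_eq (s : ℕ) (I : Finset ℕ) (a : ℕ → ℝ) :
    ∫ y : ℝ × ℝ in Set.Icc (0 : ℝ) 1 ×ˢ Set.Icc (0 : ℝ) 1,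
        ‖∑ n ∈ I, a n * Complex.exp (2 * Real.pi * Complex.I *
          ((n : ℂ) * (y.1 : ℂ) + (n : ℂ) ^ 2 * (y.2 : ℂ)))‖ ^ (2 * s) =
      weightedAdditiveEnergy I a (fun n ↦ ((n : ℤ), (n : ℤ) ^ 2)) s := by
  let e : AddChar ℝ ℂ := Circle.coeHom.compAddChar Real.fourierChar
  have he : ∀ y : ℝ, e y = Complex.exp (2 * Real.pi * Complex.I * y) := fun y ↦ by
    show (Real.fourierChar y : ℂ) = _
    rw [Real.fourierChar_apply]
    push_cast
    ring_nf
  have horth : ∀ m : ℤ, m ≠ 0 → |m| ≤ s * (I.sup id) ^ 2 →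
      ∫ y in Set.Icc (0 : ℝ) 1, e (m • y) = 0 :=
    fun m hm _ ↦ setIntegral_Icc_fourierChar_zsmul_eq_zero hm
  have h := integral_prod_norm_quadratic_sum_pow_eq _ _ e
    (continuous_subtype_val.comp Real.continuous_fourierChar) (fun y ↦ Circle.norm_coe _) s
    (I.sup id) I (fun n hn ↦ le_sup (f := id) hn) a horth horth
  simpa [Measure.prod_restrict, ← Measure.volume_eq_prod, he, zsmul_eq_mul] using h

theorem qadic_L6_eq_torus_L6_general (q : ℕ) [Fact q.Prime]
    (μ : Measure ℚ_[q]) [μ.IsAddHaarMeasure]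
    (hμ : μ {x : ℚ_[q] | ‖x‖ ≤ 1} = 1)
    (χ : ℚ_[q] → ℂ)
    (hχ_mul : ∀ x y : ℚ_[q], χ (x + y) = χ x * χ y)
    (hχ_norm : ∀ x : ℚ_[q], ‖χ x‖ = 1)
    (hχ_triv : ∀ x : ℚ_[q], ‖x‖ ≤ 1 → χ x = 1)
    (hχ_nontriv : ∃ x : ℚ_[q], ‖x‖ ≤ (q : ℝ) ∧ χ x ≠ 1)
    (t : ℕ) (ht : 1 ≤ t) (a : ℕ → ℝ) :
    ∫ x in {x : ℚ_[q] × ℚ_[q] | max ‖x.1‖ ‖x.2‖ ≤ (q : ℝ) ^ ((10 * t : ℕ) : ℤ)},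
        ‖∑ n ∈ Finset.Icc 1 (q ^ t),
            (a n : ℂ) * χ ((n : ℚ_[q]) * x.1 + (n : ℚ_[q]) ^ 2 * x.2)‖ ^ 6 ∂(μ.prod μ)
      = (q : ℝ) ^ ((20 * t : ℕ) : ℤ) *
          ∫ y : ℝ × ℝ in Set.Icc (0 : ℝ) 1 ×ˢ Set.Icc (0 : ℝ) 1,
            ‖∑ n ∈ Finset.Icc 1 (q ^ t),
                (a n : ℂ) * Complex.exp (2 * Real.pi * Complex.I *
                  ((n : ℂ) * (y.1 : ℂ) + (n : ℂ) ^ 2 * (y.2 : ℂ)))‖ ^ 6 := by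
  let ψ : AddChar ℚ_[q] ℂ := ⟨χ, hχ_triv 0 (by simp), hχ_mul⟩
  have hsmall : 3 * (q ^ t) ^ 2 < q ^ (10 * t) := by
    have hQ : 2 ≤ q ^ t := (Fact.out : q.Prime).two_le.trans (Nat.le_self_pow (by omega) q)
    calc 3 * (q ^ t) ^ 2 < 2 ^ 8 * (q ^ t) ^ 2 := by gcongr; omega
      _ ≤ (q ^ t) ^ 8 * (q ^ t) ^ 2 := by gcongr
      _ = q ^ (10 * t) := by ring
  have hregion : {x : ℚ_[q] × ℚ_[q] | max ‖x.1‖ ‖x.2‖ ≤ (q : ℝ) ^ ((10 * t : ℕ) : ℤ)} =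
      Metric.closedBall 0 ((q : ℝ) ^ (10 * t)) ×ˢ Metric.closedBall 0 ((q : ℝ) ^ (10 * t)) := by
    ext
    simp only [Set.mem_ofPred_eq, Set.mem_prod, mem_closedBall_zero_iff, max_le_iff, zpow_natCast]
  have hμ' : μ (Metric.closedBall 0 1) = 1 := by simpa [Metric.closedBall, dist_eq_norm] using hμ
  rw [hregion]
  refine (Padic.setIntegral_prod_norm_quadratic_sum_pow_eq μ hμ' ψ hχ_norm hχ_triv hχ_nontriv
    3 (q ^ t) (10 * t) hsmall _ (fun n hn ↦ (mem_Icc.1 hn).2) a).trans ?_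
  rw [← setIntegral_unitSquare_norm_quadratic_sum_pow_eq 3 _ a, ← pow_add, zpow_natCast]
  congr 2
  ring

/-- For real `a_1, …, a_{q^t}`,
`∫_{max(|x₁|,|x₂|) ≤ q^{10t}} |∑_n a_n χ(n x₁ + n² x₂)|⁶ dμ²
  = q^{20t} ∫_{[0,1]²} |∑_n a_n e(n y₁ + n² y₂)|⁶ dy`. -/
theorem qadic_L6_eq_torus_L6 (q : ℕ) [Fact q.Prime] (hq2 : q ≠ 2)
    (μ : Measure ℚ_[q]) [μ.IsAddHaarMeasure] [SigmaFinite μ]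
    (hμ : μ {x : ℚ_[q] | ‖x‖ ≤ 1} = 1)
    (χ : ℚ_[q] → ℂ)
    (hχ_mul : ∀ x y : ℚ_[q], χ (x + y) = χ x * χ y)
    (hχ_norm : ∀ x : ℚ_[q], ‖χ x‖ = 1)
    (hχ_triv : ∀ x : ℚ_[q], ‖x‖ ≤ 1 → χ x = 1)
    (hχ_nontriv : ∃ x : ℚ_[q], ‖x‖ ≤ (q : ℝ) ∧ χ x ≠ 1)
    (t : ℕ) (ht : 1 ≤ t) (a : ℕ → ℝ) :
    ∫ x in {x : ℚ_[q] × ℚ_[q] | max ‖x.1‖ ‖x.2‖ ≤ (q : ℝ) ^ ((10 * t : ℕ) : ℤ)},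
        ‖∑ n ∈ Finset.Icc 1 (q ^ t),
            (a n : ℂ) * χ ((n : ℚ_[q]) * x.1 + (n : ℚ_[q]) ^ 2 * x.2)‖ ^ 6 ∂(μ.prod μ)
      = (q : ℝ) ^ ((20 * t : ℕ) : ℤ) *
          ∫ y : ℝ × ℝ in Set.Icc (0 : ℝ) 1 ×ˢ Set.Icc (0 : ℝ) 1,
            ‖∑ n ∈ Finset.Icc 1 (q ^ t),
                (a n : ℂ) * Complex.exp (2 * Real.pi * Complex.I *
                  ((n : ℂ) * (y.1 : ℂ) + (n : ℂ) ^ 2 * (y.2 : ℂ)))‖ ^ 6 :=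
  qadic_L6_eq_torus_L6_general q μ hμ χ hχ_mul hχ_norm hχ_triv hχ_nontriv t ht a
end

section
/- Let m ≥ 1 be an integer, L > 1 a real number, and let z₁, …, z_m ∈ ℂ with z := z₁ + ⋯ + z_m. If |z| > L · m · max_{1 ≤ i ≠ j ≤ m} |z_i z_j|^{1/2} (where the maximum over the empty set is 0 when m = 1), then there exists an index i with |z| ≤ (1 − L^{-1})^{-1} |z_i|. -/
/-- **Narrow lemma (pointwise form).** If `|z₁ + ⋯ + z_m| > L·m·max_{i≠j} |z_i z_j|^{1/2}`
(with the maximum over the empty set equal to `0` when `m = 1`), then some summand satisfies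
`|z| ≤ (1 - L⁻¹)⁻¹ |z_i|`. -/
theorem narrow_lemma_pointwise (m : ℕ) (hm : 1 ≤ m) (L : ℝ) (hL : 1 < L) (z : Fin m → ℂ)
    (h : L * m * (⨆ i, ⨆ j, ⨆ _ : i ≠ j, Real.sqrt ‖z i * z j‖) < ‖∑ i, z i‖) :
    ∃ i, ‖∑ j, z j‖ ≤ (1 - L⁻¹)⁻¹ * ‖z i‖ := by
  have hmne : Nonempty (Fin m) := ⟨⟨0, hm⟩⟩
  set M : ℝ := ⨆ i, ⨆ j, ⨆ _ : i ≠ j, Real.sqrt ‖z i * z j‖ with hMdef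
  obtain ⟨i, _, hi⟩ := Finset.exists_max_image Finset.univ (fun j => ‖z j‖)
    ⟨⟨0, hm⟩, Finset.mem_univ _⟩
  have hbdd1 : ∀ a : Fin m,
      BddAbove (Set.range fun j => ⨆ _ : a ≠ j, Real.sqrt ‖z a * z j‖) :=
    fun a => (Set.finite_range _).bddAbove
  have hbdd0 : BddAbove (Set.range fun a => ⨆ j, ⨆ _ : a ≠ j, Real.sqrt ‖z a * z j‖) :=
    (Set.finite_range _).bddAbove
  have hMle : ∀ j, i ≠ j → Real.sqrt ‖z i * z j‖ ≤ M := by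
    intro j hj
    calc Real.sqrt ‖z i * z j‖
        ≤ ⨆ _ : i ≠ j, Real.sqrt ‖z i * z j‖ :=
          le_ciSup (f := fun _ : i ≠ j => Real.sqrt ‖z i * z j‖)
            ((Set.finite_range _).bddAbove) hj
      _ ≤ ⨆ j, ⨆ _ : i ≠ j, Real.sqrt ‖z i * z j‖ := le_ciSup (hbdd1 i) j
      _ ≤ M := le_ciSup hbdd0 i
  have hM0 : 0 ≤ M := by
    haveI : IsEmpty (i ≠ i) := ⟨fun hcon => hcon rfl⟩
    have h1 : (0 : ℝ) = ⨆ _ : i ≠ i, Real.sqrt ‖z i * z i‖ := by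
      rw [Real.iSup_of_isEmpty]
    calc (0 : ℝ) = ⨆ _ : i ≠ i, Real.sqrt ‖z i * z i‖ := h1
      _ ≤ ⨆ j, ⨆ _ : i ≠ j, Real.sqrt ‖z i * z j‖ := le_ciSup (hbdd1 i) i
      _ ≤ M := le_ciSup hbdd0 i
  -- each other summand is small
  have hzj : ∀ j, j ≠ i → ‖z j‖ ≤ M := by
    intro j hj
    have h1 : ‖z j‖ ≤ Real.sqrt ‖z i * z j‖ := by
      rw [norm_mul]
      have := hi j (Finset.mem_univ j)
      nlinarith [Real.sq_sqrt (mul_nonneg (norm_nonneg (z i)) (norm_nonneg (z j))),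
        Real.sqrt_nonneg (‖z i‖ * ‖z j‖), norm_nonneg (z j), norm_nonneg (z i)]
    exact h1.trans (hMle j hj.symm)
  have hsum : ‖∑ j, z j‖ ≤ ‖z i‖ + (m - 1 : ℕ) * M := by
    calc ‖∑ j, z j‖ ≤ ∑ j, ‖z j‖ := norm_sum_le _ _
      _ = ‖z i‖ + ∑ j ∈ Finset.univ.erase i, ‖z j‖ := by
          exact (Finset.add_sum_erase _ _ (Finset.mem_univ i)).symm
      _ ≤ ‖z i‖ + (m - 1 : ℕ) * M := by
          gcongr ‖z i‖ + ?_
          have := Finset.sum_le_card_nsmul (Finset.univ.erase i) (fun j => ‖z j‖) M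
            (fun j hj => hzj j (Finset.ne_of_mem_erase hj))
          simpa [Finset.card_erase_of_mem, nsmul_eq_mul] using this
  set S := ‖∑ j, z j‖ with hS
  refine ⟨i, ?_⟩
  have hL0 : (0 : ℝ) < L := lt_trans one_pos hL
  have hLinv : (0 : ℝ) < 1 - L⁻¹ := by
    have : L⁻¹ < 1 := inv_lt_one_of_one_lt₀ hL
    linarith
  have hm1 : ((m - 1 : ℕ) : ℝ) = (m : ℝ) - 1 := by
    have : (1 : ℕ) ≤ m := hm
    push_cast [Nat.cast_sub this]
    ring
  rw [hm1] at hsum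
  -- from h : L * m * M < S, get m * M ≤ L⁻¹ * S
  have hmM : (m : ℝ) * M ≤ L⁻¹ * S := by
    have h2 := mul_le_mul_of_nonneg_left h.le (inv_nonneg.2 hL0.le)
    calc (m : ℝ) * M = L⁻¹ * (L * m * M) := by field_simp
      _ ≤ L⁻¹ * S := h2
  have hfin : (1 - L⁻¹) * S ≤ ‖z i‖ := by nlinarith
  rw [le_inv_mul_iff₀ hLinv]
  exact hfin
end

section
/- Let q be an odd prime, let δ, κ > 0 with κ ≥ δ^{1/2}, and let ξ₁, ξ₂, ξ₃, ξ₄ ∈ ℤ_q and η₁, η₂, η₃, η₄ ∈ ℚ_q satisfy: |η_i − ξ_i²| ≤ δ for i = 1, 2, 3, 4; ξ₁ + ξ₂ = ξ₃ + ξ₄; η₁ + η₂ = η₃ + η₄; and |ξ₁ − ξ₄| ≥ κ. Then |ξ₁ − ξ₃| ≤ δ/κ; in particular |ξ₁ − ξ₃| ≤ δ^{1/2}. -/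
/-- **Transversality for the q-adic parabola.** If `ξᵢ ∈ ℤ_q`, `|ηᵢ - ξᵢ²| ≤ δ`,
`ξ₁ + ξ₂ = ξ₃ + ξ₄`, `η₁ + η₂ = η₃ + η₄`, `κ ≥ δ^{1/2}` and `|ξ₁ - ξ₄| ≥ κ`, then
`|ξ₁ - ξ₃| ≤ δ/κ ≤ δ^{1/2}`. -/
theorem parabola_transversality (q : ℕ) [Fact q.Prime] (hq2 : q ≠ 2)
    (δ κ : ℝ) (hδ : 0 < δ) (hκ : 0 < κ) (hsep : Real.sqrt δ ≤ κ)
    (ξ₁ ξ₂ ξ₃ ξ₄ η₁ η₂ η₃ η₄ : ℚ_[q])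
    (hξ₁ : ‖ξ₁‖ ≤ 1) (hξ₂ : ‖ξ₂‖ ≤ 1) (hξ₃ : ‖ξ₃‖ ≤ 1) (hξ₄ : ‖ξ₄‖ ≤ 1)
    (hη₁ : ‖η₁ - ξ₁ ^ 2‖ ≤ δ) (hη₂ : ‖η₂ - ξ₂ ^ 2‖ ≤ δ)
    (hη₃ : ‖η₃ - ξ₃ ^ 2‖ ≤ δ) (hη₄ : ‖η₄ - ξ₄ ^ 2‖ ≤ δ)
    (hsum : ξ₁ + ξ₂ = ξ₃ + ξ₄) (hsum' : η₁ + η₂ = η₃ + η₄)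
    (hfar : κ ≤ ‖ξ₁ - ξ₄‖) :
    ‖ξ₁ - ξ₃‖ ≤ δ / κ ∧ ‖ξ₁ - ξ₃‖ ≤ Real.sqrt δ := by
  have h2 : ‖(2 : ℚ_[q])‖ = 1 := by
    have hle : ‖(2 : ℚ_[q])‖ ≤ 1 := by
      simpa using Padic.norm_int_le_one (p := q) 2
    have hnlt : ¬ ‖(2 : ℚ_[q])‖ < 1 := by
      rw [show ((2 : ℚ_[q]) = ((2 : ℤ) : ℚ_[q])) by norm_num,
        Padic.norm_intCast_lt_one_iff]
      intro h
      have h' : q ∣ 2 := by exact_mod_cast h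
      exact hq2 ((Nat.prime_dvd_prime_iff_eq Fact.out Nat.prime_two).mp h')
    linarith [lt_or_eq_of_le hle]
  -- key algebraic identity
  have key : 2 * (ξ₁ - ξ₃) * (ξ₁ - ξ₄)
      = (ξ₁ ^ 2 - η₁) + (ξ₂ ^ 2 - η₂) - (ξ₃ ^ 2 - η₃) - (ξ₄ ^ 2 - η₄) := by
    have hξ : ξ₂ = ξ₃ + ξ₄ - ξ₁ := by linear_combination hsum
    have hη : η₂ = η₃ + η₄ - η₁ := by linear_combination hsum'
    rw [hξ, hη]; ring
  have hnorm : ‖2 * (ξ₁ - ξ₃) * (ξ₁ - ξ₄)‖ ≤ δ := by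
    have add2 : ∀ x y : ℚ_[q], ‖x‖ ≤ δ → ‖y‖ ≤ δ → ‖x + y‖ ≤ δ := fun x y hx hy =>
      le_trans (Padic.nonarchimedean x y) (max_le hx hy)
    have h1 : ‖ξ₁ ^ 2 - η₁‖ ≤ δ := by rwa [norm_sub_rev] at hη₁
    have h2' : ‖ξ₂ ^ 2 - η₂‖ ≤ δ := by rwa [norm_sub_rev] at hη₂
    have h3 : ‖-(ξ₃ ^ 2 - η₃)‖ ≤ δ := by rw [norm_neg]; rwa [norm_sub_rev] at hη₃
    have h4 : ‖-(ξ₄ ^ 2 - η₄)‖ ≤ δ := by rw [norm_neg]; rwa [norm_sub_rev] at hη₄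
    have e : (ξ₁ ^ 2 - η₁) + (ξ₂ ^ 2 - η₂) - (ξ₃ ^ 2 - η₃) - (ξ₄ ^ 2 - η₄)
        = ((ξ₁ ^ 2 - η₁) + (ξ₂ ^ 2 - η₂)) + (-(ξ₃ ^ 2 - η₃)) + (-(ξ₄ ^ 2 - η₄)) := by ring
    rw [key, e]
    exact add2 _ _ (add2 _ _ (add2 _ _ h1 h2') h3) h4
  have hprod : ‖ξ₁ - ξ₃‖ * ‖ξ₁ - ξ₄‖ ≤ δ := by
    have : ‖2 * (ξ₁ - ξ₃) * (ξ₁ - ξ₄)‖ = ‖ξ₁ - ξ₃‖ * ‖ξ₁ - ξ₄‖ := by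
      rw [norm_mul, norm_mul, h2, one_mul]
    linarith [hnorm, this ▸ hnorm]
  have hκ' : (0 : ℝ) < ‖ξ₁ - ξ₄‖ := lt_of_lt_of_le hκ hfar
  have h1 : ‖ξ₁ - ξ₃‖ ≤ δ / κ := by
    rw [le_div_iff₀ hκ]
    calc ‖ξ₁ - ξ₃‖ * κ ≤ ‖ξ₁ - ξ₃‖ * ‖ξ₁ - ξ₄‖ :=
          mul_le_mul_of_nonneg_left hfar (norm_nonneg _)
      _ ≤ δ := hprod
  refine ⟨h1, le_trans h1 ?_⟩
  rw [div_le_iff₀ hκ]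
  calc δ = Real.sqrt δ * Real.sqrt δ := (Real.mul_self_sqrt hδ.le).symm
    _ ≤ Real.sqrt δ * κ := mul_le_mul_of_nonneg_left hsep (Real.sqrt_nonneg _)
end

section
/- Let q be an odd prime, let r be a positive even integer, let k ≥ 1 be an integer, and set R_k := q^{kr} and R_{k+1} := q^{(k+1)r}. Let α, α' ∈ ℤ_q and suppose there exists (ξ,η) ∈ ℚ_q² with max(|ξ|,|η|) > R_{k+1}^{-1/2}, |ξ| ≤ R_k^{-1/2}, |η − 2αξ| ≤ R_k^{-1}, and |η − 2α'ξ| ≤ R_k^{-1}. Then |α − α'| ≤ R_k^{-1/2} q^{r/2}. -/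
/-- **Fourier-support overlap in the High Lemma.** With `R_k = q^{kr}`, `R_{k+1} = q^{(k+1)r}`,
if some `(ξ,η)` satisfies `max(|ξ|,|η|) > R_{k+1}^{-1/2}`, `|ξ| ≤ R_k^{-1/2}`,
`|η - 2αξ| ≤ R_k^{-1}` and `|η - 2α'ξ| ≤ R_k^{-1}`, then `|α - α'| ≤ R_k^{-1/2} q^{r/2}`. -/
theorem high_lemma_overlap (q : ℕ) [Fact q.Prime] (hq2 : q ≠ 2)
    (r : ℕ) (hr : 0 < r) (hr2 : 2 ∣ r) (k : ℕ) (hk : 1 ≤ k) (α α' : ℚ_[q])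
    (hα : ‖α‖ ≤ 1) (hα' : ‖α'‖ ≤ 1)
    (h : ∃ ξ η : ℚ_[q],
      (q : ℝ) ^ (-(((k + 1) * (r / 2) : ℕ) : ℤ)) < max ‖ξ‖ ‖η‖ ∧
      ‖ξ‖ ≤ (q : ℝ) ^ (-((k * (r / 2) : ℕ) : ℤ)) ∧
      ‖η - 2 * α * ξ‖ ≤ (q : ℝ) ^ (-((k * r : ℕ) : ℤ)) ∧
      ‖η - 2 * α' * ξ‖ ≤ (q : ℝ) ^ (-((k * r : ℕ) : ℤ))) :
    ‖α - α'‖ ≤ (q : ℝ) ^ (-((k * (r / 2) : ℕ) : ℤ)) * (q : ℝ) ^ (((r / 2 : ℕ)) : ℤ) := by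
  obtain ⟨s, rfl⟩ := hr2
  have hsdiv : (2 * s) / 2 = s := Nat.mul_div_cancel_left s (by norm_num)
  rw [hsdiv] at h ⊢
  obtain ⟨ξ, η, hmax, hξ, h1, h2⟩ := h
  have hqp : q.Prime := Fact.out
  have hq1 : (1:ℝ) < q := by exact_mod_cast hqp.one_lt
  have hq0 : (0:ℝ) < q := by linarith
  -- ‖2‖ = 1
  have h2norm : ‖(2 : ℚ_[q])‖ = 1 := by
    have hle : ‖((2:ℤ) : ℚ_[q])‖ ≤ 1 := Padic.norm_int_le_one _
    have hnd : ¬ ((q:ℤ) ∣ (2:ℤ)) := by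
      intro hd
      have : q ∣ 2 := Int.ofNat_dvd.mp (by exact_mod_cast hd)
      exact hq2 ((Nat.prime_dvd_prime_iff_eq hqp Nat.prime_two).mp this)
    have hnlt : ¬ ‖((2:ℤ) : ℚ_[q])‖ < 1 := by
      rw [Padic.norm_intCast_lt_one_iff]; exact hnd
    have : ‖((2:ℤ) : ℚ_[q])‖ = 1 := le_antisymm hle (not_lt.mp hnlt)
    simpa using this
  -- exponent comparison : q^{-kr} ≤ q^{-(k+1)s}
  have hpowle : (q:ℝ) ^ (-((k * (2 * s) : ℕ) : ℤ)) ≤ (q:ℝ) ^ (-(((k + 1) * s : ℕ) : ℤ)) := by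
    apply zpow_le_zpow_right₀ (le_of_lt hq1)
    have : (k + 1) * s ≤ k * (2 * s) := by nlinarith [hk]
    omega
  -- lower bound on ‖ξ‖
  have hξlow : (q:ℝ) ^ (-(((k + 1) * s : ℕ) : ℤ)) < ‖ξ‖ := by
    by_contra hcon
    push_neg at hcon
    have hη : ‖η‖ ≤ (q:ℝ) ^ (-(((k + 1) * s : ℕ) : ℤ)) := by
      have heq : η = (η - 2 * α * ξ) + 2 * α * ξ := by ring
      have hna : ‖(η - 2 * α * ξ) + 2 * α * ξ‖ ≤ max ‖η - 2 * α * ξ‖ ‖2 * α * ξ‖ :=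
        Padic.nonarchimedean _ _
      rw [← heq] at hna
      refine hna.trans (max_le (h1.trans hpowle) ?_)
      calc ‖2 * α * ξ‖ = ‖(2:ℚ_[q])‖ * ‖α‖ * ‖ξ‖ := by rw [norm_mul, norm_mul]
        _ ≤ 1 * 1 * ‖ξ‖ := by
            apply mul_le_mul_of_nonneg_right _ (norm_nonneg _)
            exact mul_le_mul (le_of_eq h2norm) hα (norm_nonneg _) zero_le_one
        _ = ‖ξ‖ := by ring
        _ ≤ _ := hcon
    exact absurd hmax (not_lt.mpr (max_le hcon hη))
  -- key bound
  have key : ‖α - α'‖ * ‖ξ‖ ≤ (q:ℝ) ^ (-((k * (2 * s) : ℕ) : ℤ)) := by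
    have heq : 2 * (α - α') * ξ = (η - 2 * α' * ξ) - (η - 2 * α * ξ) := by ring
    have hna : ‖(η - 2 * α' * ξ) - (η - 2 * α * ξ)‖ ≤ max ‖η - 2 * α' * ξ‖ ‖η - 2 * α * ξ‖ := by
      have hn := Padic.nonarchimedean (η - 2 * α' * ξ) (-(η - 2 * α * ξ))
      rwa [← sub_eq_add_neg, norm_neg] at hn
    have : ‖2 * (α - α') * ξ‖ ≤ (q:ℝ) ^ (-((k * (2 * s) : ℕ) : ℤ)) := by
      rw [heq]; exact hna.trans (max_le h2 h1)
    calc ‖α - α'‖ * ‖ξ‖ = ‖2 * (α - α') * ξ‖ := by rw [norm_mul, norm_mul, h2norm, one_mul]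
      _ ≤ _ := this
  rcases eq_or_ne α α' with rfl | hne
  · simp only [sub_self, norm_zero]
    positivity
  · have hpos : 0 < ‖α - α'‖ := norm_pos_iff.mpr (sub_ne_zero.mpr hne)
    have hlt : ‖α - α'‖ * (q:ℝ) ^ (-(((k + 1) * s : ℕ) : ℤ)) < (q:ℝ) ^ (-((k * (2 * s) : ℕ) : ℤ)) :=
      lt_of_lt_of_le (mul_lt_mul_of_pos_left hξlow hpos) key
    have hfin : ‖α - α'‖ < (q:ℝ) ^ (-((k * (2 * s) : ℕ) : ℤ)) * (q:ℝ) ^ ((((k + 1) * s : ℕ)) : ℤ) := by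
      have hp : (0:ℝ) < (q:ℝ) ^ (-(((k + 1) * s : ℕ) : ℤ)) := by positivity
      calc ‖α - α'‖ = (‖α - α'‖ * (q:ℝ) ^ (-(((k + 1) * s : ℕ) : ℤ))) * (q:ℝ) ^ ((((k + 1) * s : ℕ)) : ℤ) := by
              rw [mul_assoc, ← zpow_add₀ (ne_of_gt hq0)]; simp
        _ < _ := by
            apply mul_lt_mul_of_pos_right hlt
            positivity
    calc ‖α - α'‖ ≤ (q:ℝ) ^ (-((k * (2 * s) : ℕ) : ℤ)) * (q:ℝ) ^ ((((k + 1) * s : ℕ)) : ℤ) :=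
          le_of_lt hfin
      _ = (q:ℝ) ^ (-((k * s : ℕ) : ℤ)) * (q:ℝ) ^ ((s : ℕ) : ℤ) := by
          rw [← zpow_add₀ (ne_of_gt hq0), ← zpow_add₀ (ne_of_gt hq0)]
          congr 1
          push_cast
          ring
end
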